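/- (Inexact IMEX scheme.) Let F : ℝ^n → ℝ be differentiable with F ∈ S_{μ, L_F}, μ > 0, let N be a real n×n skew-symmetric matrix, and let x* satisfy ∇F(x*) + N x* = 0. Suppose the sequences satisfy (x̂_{k+1} − x_k)/α_k = y_k − x̂_{k+1}, (y_{k+1} − y_k)/α_k = x̂_{k+1} − y_{k+1} − (1/μ)(∇F(x̂_{k+1}) + N y_{k+1}) − ε_k/α_k, and (x_{k+1} − x_k)/α_k = y_{k+1} − (1/2)(x_{k+1} + x̂_{k+1}), where the residuals ε_k ∈ ℝ^n satisfy ‖ε_k‖² ≤ (α_k/2)(‖x̂_{k+1} − x_k‖² + α_k‖y_{k+1} − x̂_{k+1}‖²), and the step sizes satisfy α_k² L_F ≤ (1 + α_k/2) μ with α_k > 0. Then E_{k+1} ≤ (1 + α_k/2)^{−1} E_k for every k, where E_k = D_F(x_k, x*) + (μ/2)‖y_k − x*‖²; in particular for α_k = √(μ/L_F) one has E_k ≤ (1 + (1/2)√(μ/L_F))^{−k} E_0. -/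

import Mathlib

open Matrix

/-- The continuous linear functional `v ↦ ⟨z, v⟩` on `ℝⁿ`. -/
noncomputable def dpCLM {m : ℕ} (z : Fin m → ℝ) : (Fin m → ℝ) →L[ℝ] ℝ :=
  LinearMap.toContinuousLinearMap
    { toFun := fun v => z ⬝ᵥ v
      map_add' := fun a b => by simp [dotProduct_add]
      map_smul' := fun c a => by simp [dotProduct_smul] }

/-!
The energy `E = D_F(x, x*) + (μ/2)‖y - x*‖²` is a Lyapunov function. Since
`(1 + α/2)(x_{k+1} - x̂_{k+1}) = (x_k - x̂_{k+1}) + α(y_{k+1} - x̂_{k+1})`, the three-point identity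
for Bregman divergences expresses `(1 + α/2) D_F(x_{k+1}, x*) - D_F(x_k, x*)` through
`D_F(x_{k+1}, x̂_{k+1})`, `D_F(x_k, x̂_{k+1})` and `D_F(x̂_{k+1}, x*)`. As also
`(1 + α/2)(x_{k+1} - x̂_{k+1}) = α(y_{k+1} - y_k)`, the step-size condition and `L_F`-smoothness
bound the first by `(μ/2)‖y_{k+1} - y_k‖²`, which cancels against the `y`-part of the energy.
Testing the `y`-update against `y_{k+1} - x*` kills the skew-symmetric part, as `⟨N z, z⟩ = 0`
and `∇F(x*) = -N x*`. Young's inequality and the residual bound absorb `ε_k` into the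
strong-convexity terms, and what remains is `-(α/2) D_F(x̂_{k+1}, x*) ≤ 0`.
-/

section DotProduct

variable {ι : Type*} [Fintype ι]

theorem dotProduct_sub_self (u v : ι → ℝ) :
    (u - v) ⬝ᵥ (u - v) = u ⬝ᵥ u - 2 * (u ⬝ᵥ v) + v ⬝ᵥ v := by
  rw [sub_dotProduct, dotProduct_sub, dotProduct_sub, dotProduct_comm v u]
  ring

theorem sub_dotProduct_sub_comm (u v : ι → ℝ) : (u - v) ⬝ᵥ (u - v) = (v - u) ⬝ᵥ (v - u) := by
  rw [← neg_sub v u, neg_dotProduct, dotProduct_neg, neg_neg]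

theorem neg_dotProduct_le {t : ℝ} (ht : 0 < t) (u v : ι → ℝ) :
    -(u ⬝ᵥ v) ≤ u ⬝ᵥ u / t + t / 4 * (v ⬝ᵥ v) := by
  have hsq : 0 ≤ (u + (t / 2) • v) ⬝ᵥ (u + (t / 2) • v) := dotProduct_star_self_nonneg _
  have hexp : (u + (t / 2) • v) ⬝ᵥ (u + (t / 2) • v) =
      t * (u ⬝ᵥ u / t + t / 4 * (v ⬝ᵥ v) + u ⬝ᵥ v) := by
    simp only [add_dotProduct, dotProduct_add, smul_dotProduct, dotProduct_smul, smul_eq_mul,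
      dotProduct_comm v u]
    field_simp
    ring
  rw [hexp] at hsq
  linarith [nonneg_of_mul_nonneg_right hsq ht]

theorem Matrix.mulVec_dotProduct_self_of_transpose_eq_neg {R : Type*} [CommRing R]
    [NoZeroDivisors R] [CharZero R] {N : Matrix ι ι R} (hN : Nᵀ = -N) (z : ι → R) :
    N *ᵥ z ⬝ᵥ z = 0 := by
  refine self_eq_neg.mp ?_
  calc N *ᵥ z ⬝ᵥ z = z ⬝ᵥ N *ᵥ z := dotProduct_comm _ _
    _ = z ᵥ* N ⬝ᵥ z := dotProduct_mulVec z N z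
    _ = -(N *ᵥ z ⬝ᵥ z) := by rw [← mulVec_transpose, hN, neg_mulVec, neg_dotProduct]

end DotProduct

section Bregman

variable {ι : Type*} [Fintype ι] (F : (ι → ℝ) → ℝ) (gradF : (ι → ℝ) → ι → ℝ)

def bregman (x y : ι → ℝ) : ℝ := F x - F y - gradF y ⬝ᵥ (x - y)

theorem bregman_three_point (u v w : ι → ℝ) :
    bregman F gradF u w =
      bregman F gradF u v + bregman F gradF v w + (gradF v - gradF w) ⬝ᵥ (u - v) := by
  simp only [bregman, sub_dotProduct, dotProduct_sub]
  ring

theorem bregman_add_bregman_swap (u v : ι → ℝ) :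
    bregman F gradF u v + bregman F gradF v u = (gradF u - gradF v) ⬝ᵥ (u - v) := by
  simp only [bregman, sub_dotProduct, dotProduct_sub]
  ring

variable {F gradF} {μ : ℝ}

theorem bregman_nonneg (hlower : ∀ u v, μ / 2 * ((u - v) ⬝ᵥ (u - v)) ≤ bregman F gradF u v)
    (hμ : 0 ≤ μ) (u v : ι → ℝ) : 0 ≤ bregman F gradF u v :=
  (mul_nonneg (by positivity) (dotProduct_star_self_nonneg _)).trans (hlower u v)

theorem bregman_add_half_sq_le
    (hlower : ∀ u v, μ / 2 * ((u - v) ⬝ᵥ (u - v)) ≤ bregman F gradF u v) (u v : ι → ℝ) :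
    bregman F gradF u v + μ / 2 * ((u - v) ⬝ᵥ (u - v)) ≤ (gradF u - gradF v) ⬝ᵥ (u - v) := by
  have h := hlower v u
  rw [← sub_dotProduct_sub_comm] at h
  linarith [bregman_add_bregman_swap F gradF u v]

end Bregman

noncomputable def imexEnergy {ι : Type*} [Fintype ι] (F : (ι → ℝ) → ℝ)
    (gradF : (ι → ℝ) → ι → ℝ) (μ : ℝ) (xs x y : ι → ℝ) : ℝ :=
  bregman F gradF x xs + μ / 2 * ((y - xs) ⬝ᵥ (y - xs))

section Corrector

variable {V : Type*} [AddCommGroup V] [Module ℝ V] {A : ℝ} {x y xhat x' y' : V}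

theorem imex_corrector_eq_predictor_gap
    (h3 : x' - x = A • (y' - (1 / 2 : ℝ) • (x' + xhat))) :
    (1 + A / 2) • (x' - xhat) = (x - xhat) + A • (y' - xhat) := by
  linear_combination (norm := module) h3

theorem imex_corrector_eq_dual_step (h1 : xhat - x = A • (y - xhat))
    (h3 : x' - x = A • (y' - (1 / 2 : ℝ) • (x' + xhat))) :
    (1 + A / 2) • (x' - xhat) = A • (y' - y) := by
  linear_combination (norm := module) h3 - h1

end Corrector

section ImexStep

variable {ι : Type*} [Fintype ι] {F : (ι → ℝ) → ℝ} {gradF : (ι → ℝ) → ι → ℝ} {μ LF A : ℝ}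
  {x y xhat x' y' xs e : ι → ℝ}

theorem bregman_corrector_eq
    (h : (1 + A / 2) • (x' - xhat) = (x - xhat) + A • (y' - xhat)) :
    (1 + A / 2) * bregman F gradF x' xs - bregman F gradF x xs =
      (1 + A / 2) * bregman F gradF x' xhat - bregman F gradF x xhat
        + A / 2 * bregman F gradF xhat xs + A * ((gradF xhat - gradF xs) ⬝ᵥ (y' - xhat)) := by
  have hg := congrArg ((gradF xhat - gradF xs) ⬝ᵥ ·) h
  simp only [dotProduct_add, dotProduct_smul, smul_eq_mul] at hg
  rw [bregman_three_point F gradF x' xhat xs, bregman_three_point F gradF x xhat xs]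
  linear_combination hg

theorem bregman_corrector_le
    (hupper : ∀ u v, bregman F gradF u v ≤ LF / 2 * ((u - v) ⬝ᵥ (u - v)))
    (hA : 0 < A) (hAstep : A ^ 2 * LF ≤ (1 + A / 2) * μ)
    (h : (1 + A / 2) • (x' - xhat) = A • (y' - y)) :
    (1 + A / 2) * bregman F gradF x' xhat ≤ μ / 2 * ((y' - y) ⬝ᵥ (y' - y)) := by
  have hs : 0 < 1 + A / 2 := by linarith
  have hsq : (1 + A / 2) ^ 2 * ((x' - xhat) ⬝ᵥ (x' - xhat)) =
      A ^ 2 * ((y' - y) ⬝ᵥ (y' - y)) := by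
    have h' := congrArg (fun v => v ⬝ᵥ v) h
    simp only [smul_dotProduct, dotProduct_smul, smul_eq_mul] at h'
    linear_combination h'
  have hw : 0 ≤ (y' - y) ⬝ᵥ (y' - y) := dotProduct_star_self_nonneg _
  refine le_of_mul_le_mul_left ?_ hs
  calc (1 + A / 2) * ((1 + A / 2) * bregman F gradF x' xhat)
      = (1 + A / 2) ^ 2 * bregman F gradF x' xhat := by ring
    _ ≤ (1 + A / 2) ^ 2 * (LF / 2 * ((x' - xhat) ⬝ᵥ (x' - xhat))) := by gcongr; exact hupper _ _
    _ = A ^ 2 * LF / 2 * ((y' - y) ⬝ᵥ (y' - y)) := by linear_combination LF / 2 * hsq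
    _ ≤ (1 + A / 2) * μ / 2 * ((y' - y) ⬝ᵥ (y' - y)) := by gcongr
    _ = (1 + A / 2) * (μ / 2 * ((y' - y) ⬝ᵥ (y' - y))) := by ring

theorem imex_dual_step_dotProduct {N : Matrix ι ι ℝ} (hN : Nᵀ = -N)
    (hxs : gradF xs + N *ᵥ xs = 0) (hμ : μ ≠ 0)
    (h2 : y' - y = A • (xhat - y' - (1 / μ) • (gradF xhat + N *ᵥ y')) - e) :
    μ * ((y' - y) ⬝ᵥ (y' - xs)) =
      A * μ * ((xhat - y') ⬝ᵥ (y' - xs)) - A * ((gradF xhat - gradF xs) ⬝ᵥ (y' - xs))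
        - μ * (e ⬝ᵥ (y' - xs)) := by
  have hshift : gradF xhat + N *ᵥ y' = (gradF xhat - gradF xs) + N *ᵥ (y' - xs) := by
    rw [mulVec_sub]
    linear_combination (norm := module) hxs
  rw [h2, hshift]
  simp only [sub_dotProduct, add_dotProduct, smul_dotProduct, smul_eq_mul,
    N.mulVec_dotProduct_self_of_transpose_eq_neg hN]
  field_simp
  ring

theorem imex_residual_le (hμ : 0 ≤ μ) (hA : 0 < A)
    (hres : e ⬝ᵥ e ≤ A / 2 * ((xhat - x) ⬝ᵥ (xhat - x) + A * ((y' - xhat) ⬝ᵥ (y' - xhat)))) :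
    -(μ * (e ⬝ᵥ (y' - xs))) ≤ μ / 2 * ((x - xhat) ⬝ᵥ (x - xhat))
      + A * μ / 2 * ((y' - xhat) ⬝ᵥ (y' - xhat)) + A * μ / 4 * ((y' - xs) ⬝ᵥ (y' - xs)) := by
  have hyoung := mul_le_mul_of_nonneg_left (neg_dotProduct_le hA e (y' - xs)) hμ
  have hres' := mul_le_mul_of_nonneg_left hres (div_nonneg hμ hA.le)
  rw [sub_dotProduct_sub_comm xhat x] at hres'
  have hcancel : μ / A * (A / 2 * ((x - xhat) ⬝ᵥ (x - xhat) + A * ((y' - xhat) ⬝ᵥ (y' - xhat))))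
      = μ / 2 * ((x - xhat) ⬝ᵥ (x - xhat)) + A * μ / 2 * ((y' - xhat) ⬝ᵥ (y' - xhat)) := by
    field_simp
  linear_combination hyoung + hres' + hcancel

theorem imexEnergy_step {N : Matrix ι ι ℝ} (hμ : 0 < μ)
    (hlower : ∀ u v, μ / 2 * ((u - v) ⬝ᵥ (u - v)) ≤ bregman F gradF u v)
    (hupper : ∀ u v, bregman F gradF u v ≤ LF / 2 * ((u - v) ⬝ᵥ (u - v)))
    (hN : Nᵀ = -N) (hxs : gradF xs + N *ᵥ xs = 0)
    (hA : 0 < A) (hAstep : A ^ 2 * LF ≤ (1 + A / 2) * μ)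
    (hres : e ⬝ᵥ e ≤ A / 2 * ((xhat - x) ⬝ᵥ (xhat - x) + A * ((y' - xhat) ⬝ᵥ (y' - xhat))))
    (h1 : xhat - x = A • (y - xhat))
    (h2 : y' - y = A • (xhat - y' - (1 / μ) • (gradF xhat + N *ᵥ y')) - e)
    (h3 : x' - x = A • (y' - (1 / 2 : ℝ) • (x' + xhat))) :
    (1 + A / 2) * imexEnergy F gradF μ xs x' y' ≤ imexEnergy F gradF μ xs x y := by
  have hD := bregman_corrector_eq (F := F) (gradF := gradF) (xs := xs)
    (imex_corrector_eq_predictor_gap h3)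
  have hsmooth := bregman_corrector_le hupper hA hAstep (imex_corrector_eq_dual_step h1 h3)
  have hdual := imex_dual_step_dotProduct hN hxs hμ.ne' h2
  have hresid := imex_residual_le (xs := xs) hμ.le hA hres
  have hstrong := hlower x xhat
  have hmono := mul_le_mul_of_nonneg_left (bregman_add_half_sq_le hlower xhat xs) hA.le
  have hDnonneg := mul_nonneg hA.le (bregman_nonneg hlower hμ.le xhat xs)
  -- re-expand every difference around `x*`; the remaining estimates then combine linearly
  have hy : (y - xs) ⬝ᵥ (y - xs) = (y' - xs) ⬝ᵥ (y' - xs) - 2 * ((y' - y) ⬝ᵥ (y' - xs))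
      + (y' - y) ⬝ᵥ (y' - y) := by
    rw [show y - xs = (y' - xs) - (y' - y) by abel, dotProduct_sub_self,
      dotProduct_comm (y' - xs) (y' - y)]
  have hyx : (y' - xhat) ⬝ᵥ (y' - xhat) = (y' - xs) ⬝ᵥ (y' - xs)
      - 2 * ((xhat - xs) ⬝ᵥ (y' - xs)) + (xhat - xs) ⬝ᵥ (xhat - xs) := by
    rw [show y' - xhat = (y' - xs) - (xhat - xs) by abel, dotProduct_sub_self,
      dotProduct_comm (y' - xs) (xhat - xs)]
  have hxy : (xhat - y') ⬝ᵥ (y' - xs) = (xhat - xs) ⬝ᵥ (y' - xs) - (y' - xs) ⬝ᵥ (y' - xs) := by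
    rw [show xhat - y' = (xhat - xs) - (y' - xs) by abel, sub_dotProduct]
  have hg : (gradF xhat - gradF xs) ⬝ᵥ (y' - xhat) = (gradF xhat - gradF xs) ⬝ᵥ (y' - xs)
      - (gradF xhat - gradF xs) ⬝ᵥ (xhat - xs) := by
    rw [show y' - xhat = (y' - xs) - (xhat - xs) by abel, dotProduct_sub]
  rw [hyx] at hresid
  rw [hxy] at hdual
  rw [hg] at hD
  rw [imexEnergy, imexEnergy, hy]
  linarith

end ImexStep

theorem inexact_imex_linear_convergence_general
    {n : ℕ} (μ LF : ℝ) (hμ : 0 < μ)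
    (F : (Fin n → ℝ) → ℝ) (gradF : (Fin n → ℝ) → (Fin n → ℝ))
    (hlower : ∀ x y : Fin n → ℝ,
      μ / 2 * ((x - y) ⬝ᵥ (x - y)) ≤ F x - F y - gradF y ⬝ᵥ (x - y))
    (hupper : ∀ x y : Fin n → ℝ,
      F x - F y - gradF y ⬝ᵥ (x - y) ≤ LF / 2 * ((x - y) ⬝ᵥ (x - y)))
    (N : Matrix (Fin n) (Fin n) ℝ) (hskew : Nᵀ = -N)
    (xs : Fin n → ℝ) (hxs : gradF xs + N.mulVec xs = 0)
    (α : ℕ → ℝ) (hα : ∀ k, 0 < α k)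
    (hαstep : ∀ k, (α k) ^ 2 * LF ≤ (1 + α k / 2) * μ)
    (x y xhat : ℕ → (Fin n → ℝ)) (ε : ℕ → (Fin n → ℝ))
    (hres : ∀ k, ε k ⬝ᵥ ε k ≤ (α k / 2) *
      ((xhat (k + 1) - x k) ⬝ᵥ (xhat (k + 1) - x k)
        + α k * ((y (k + 1) - xhat (k + 1)) ⬝ᵥ (y (k + 1) - xhat (k + 1)))))
    (hstep1 : ∀ k, xhat (k + 1) - x k = α k • (y k - xhat (k + 1)))
    (hstep2 : ∀ k, y (k + 1) - y k =
      α k • (xhat (k + 1) - y (k + 1)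
        - (1 / μ) • (gradF (xhat (k + 1)) + N.mulVec (y (k + 1)))) - ε k)
    (hstep3 : ∀ k, x (k + 1) - x k =
      α k • (y (k + 1) - (1 / 2 : ℝ) • (x (k + 1) + xhat (k + 1)))) :
    (∀ k,
      (F (x (k + 1)) - F xs - gradF xs ⬝ᵥ (x (k + 1) - xs))
          + μ / 2 * ((y (k + 1) - xs) ⬝ᵥ (y (k + 1) - xs))
        ≤ (1 + α k / 2)⁻¹ *
          ((F (x k) - F xs - gradF xs ⬝ᵥ (x k - xs))
            + μ / 2 * ((y k - xs) ⬝ᵥ (y k - xs)))) ∧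
    ((∀ k, α k = Real.sqrt (μ / LF)) → ∀ k,
      (F (x k) - F xs - gradF xs ⬝ᵥ (x k - xs))
          + μ / 2 * ((y k - xs) ⬝ᵥ (y k - xs))
        ≤ ((1 + (1 / 2) * Real.sqrt (μ / LF))⁻¹) ^ k *
          ((F (x 0) - F xs - gradF xs ⬝ᵥ (x 0 - xs))
            + μ / 2 * ((y 0 - xs) ⬝ᵥ (y 0 - xs)))) := by
  set E : ℕ → ℝ := fun k => imexEnergy F gradF μ xs (x k) (y k)
  have hdecay : ∀ k, E (k + 1) ≤ (1 + α k / 2)⁻¹ * E k := fun k =>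
    (le_inv_mul_iff₀ (by linarith [hα k])).2 <|
      imexEnergy_step hμ hlower hupper hskew hxs (hα k) (hαstep k) (hres k)
        (hstep1 k) (hstep2 k) (hstep3 k)
  refine ⟨hdecay, fun hconst k => le_geom (u := E) (by positivity) k fun j _ => ?_⟩
  rw [one_div_mul_eq_div, ← hconst j]
  exact hdecay j

/-- **Linear convergence of the inexact IMEX scheme.**
The shifted skew-symmetric solve is performed inexactly with residual `ε_k` satisfying
`‖ε_k‖² ≤ (α_k/2)(‖x̂_{k+1} - x_k‖² + α_k‖y_{k+1} - x̂_{k+1}‖²)`, the steps satisfy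
`α_k²L_F ≤ (1 + α_k/2)μ`, and the correction uses `(x_{k+1}+x̂_{k+1})/2`.  Then
`E_{k+1} ≤ (1 + α_k/2)⁻¹E_k` where `E_k = D_F(x_k,x*) + (μ/2)‖y_k - x*‖²`; in
particular for `α_k = √(μ/L_F)` one gets `E_k ≤ (1 + ½√(μ/L_F))⁻ᵏ E_0`. -/
theorem inexact_imex_linear_convergence
    {n : ℕ} (μ LF : ℝ) (hμ : 0 < μ)
    (F : (Fin n → ℝ) → ℝ) (gradF : (Fin n → ℝ) → (Fin n → ℝ))
    (hdiff : ∀ x, HasFDerivAt F (dpCLM (gradF x)) x)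
    (hlower : ∀ x y : Fin n → ℝ,
      μ / 2 * ((x - y) ⬝ᵥ (x - y)) ≤ F x - F y - gradF y ⬝ᵥ (x - y))
    (hupper : ∀ x y : Fin n → ℝ,
      F x - F y - gradF y ⬝ᵥ (x - y) ≤ LF / 2 * ((x - y) ⬝ᵥ (x - y)))
    (N : Matrix (Fin n) (Fin n) ℝ) (hskew : Nᵀ = -N)
    (xs : Fin n → ℝ) (hxs : gradF xs + N.mulVec xs = 0)
    (α : ℕ → ℝ) (hα : ∀ k, 0 < α k)
    (hαstep : ∀ k, (α k) ^ 2 * LF ≤ (1 + α k / 2) * μ)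
    (x y xhat : ℕ → (Fin n → ℝ)) (ε : ℕ → (Fin n → ℝ))
    (hres : ∀ k, ε k ⬝ᵥ ε k ≤ (α k / 2) *
      ((xhat (k + 1) - x k) ⬝ᵥ (xhat (k + 1) - x k)
        + α k * ((y (k + 1) - xhat (k + 1)) ⬝ᵥ (y (k + 1) - xhat (k + 1)))))
    (hstep1 : ∀ k, xhat (k + 1) - x k = α k • (y k - xhat (k + 1)))
    (hstep2 : ∀ k, y (k + 1) - y k =
      α k • (xhat (k + 1) - y (k + 1)
        - (1 / μ) • (gradF (xhat (k + 1)) + N.mulVec (y (k + 1)))) - ε k)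
    (hstep3 : ∀ k, x (k + 1) - x k =
      α k • (y (k + 1) - (1 / 2 : ℝ) • (x (k + 1) + xhat (k + 1)))) :
    (∀ k,
      (F (x (k + 1)) - F xs - gradF xs ⬝ᵥ (x (k + 1) - xs))
          + μ / 2 * ((y (k + 1) - xs) ⬝ᵥ (y (k + 1) - xs))
        ≤ (1 + α k / 2)⁻¹ *
          ((F (x k) - F xs - gradF xs ⬝ᵥ (x k - xs))
            + μ / 2 * ((y k - xs) ⬝ᵥ (y k - xs)))) ∧
    ((∀ k, α k = Real.sqrt (μ / LF)) → ∀ k,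
      (F (x k) - F xs - gradF xs ⬝ᵥ (x k - xs))
          + μ / 2 * ((y k - xs) ⬝ᵥ (y k - xs))
        ≤ ((1 + (1 / 2) * Real.sqrt (μ / LF))⁻¹) ^ k *
          ((F (x 0) - F xs - gradF xs ⬝ᵥ (x 0 - xs))
            + μ / 2 * ((y 0 - xs) ⬝ᵥ (y 0 - xs)))) :=
  inexact_imex_linear_convergence_general μ LF hμ F gradF hlower hupper N hskew xs hxs α hα hαstep x
    y xhat ε hres hstep1 hstep2 hstep3
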